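/- arXiv:2605.30044 — 2 statements merged into one kernel-verified Lean document; each statement's English description precedes it below -/
import Mathlib

section
/- Let H be a real Hilbert space, and suppose 𝓗 : H → ℝ satisfies 𝓗(v) ≥ ‖v‖²(1 − C‖v‖) and 𝓗(v) ≤ ‖v‖²(1 + C‖v‖) for some C > 0 and all v. Set δ = 1/(4C). If v : [0,T] → H is continuous with ‖v(0)‖ ≤ δ and 𝓗(v(t)) = 𝓗(v(0)) for all t, then ‖v(t)‖ < 2δ for all t ∈ [0,T]. -/
/-! The norm cannot cross the gap between `8δ/5` and `2δ`: while `‖v t‖ ≤ 2δ`, the lower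
energy bound gives `‖v t‖²/2 ≤ 𝓗(v t) = 𝓗(v 0) ≤ 5δ²/4`, so in fact `‖v t‖ ≤ 8δ/5`.
Since `t ↦ ‖v t‖` is continuous on the interval and starts below `δ`, the intermediate value
theorem keeps it below `8δ/5` throughout. -/

open Set

theorem IsPreconnected.bootstrap_le {X α : Type*} [TopologicalSpace X] [LinearOrder α]
    [DenselyOrdered α] [TopologicalSpace α] [OrderClosedTopology α] {s : Set X}
    (hs : IsPreconnected s) {f : X → α} (hf : ContinuousOn f s) {a b : α} (hab : a < b)
    (hgap : ∀ x ∈ s, f x < b → f x ≤ a) {x₀ : X} (hx₀ : x₀ ∈ s) (h₀ : f x₀ ≤ a) :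
    ∀ x ∈ s, f x ≤ a := by
  intro x hx
  by_contra! hax
  have hbx : b ≤ f x := not_lt.1 fun hxb => (hgap x hx hxb).not_gt hax
  obtain ⟨c, hac, hcb⟩ := exists_between hab
  obtain ⟨y, hy, hyc⟩ := hs.intermediate_value hx₀ hx hf ⟨h₀.trans hac.le, hcb.le.trans hbx⟩
  exact hac.not_ge (hyc ▸ hgap y hy (hyc ▸ hcb))

theorem le_of_sq_mul_one_sub_le_sq_mul_one_add {C δ a b : ℝ} (hCδ : 4 * C * δ = 1)
    (hb : 0 ≤ b) (haδ : a ≤ 2 * δ) (hbδ : b ≤ δ)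
    (h : a ^ 2 * (1 - C * a) ≤ b ^ 2 * (1 + C * b)) : a ≤ 8 / 5 * δ := by
  have hδ : 0 ≤ δ := hb.trans hbδ
  have hC : 0 ≤ C := by nlinarith
  have hCa : C * a ≤ 1 / 2 := by nlinarith [mul_le_mul_of_nonneg_left haδ hC]
  have hCb : C * b ≤ 1 / 4 := by nlinarith [mul_le_mul_of_nonneg_left hbδ hC]
  have hsq : a ^ 2 ≤ 5 / 2 * δ ^ 2 := by
    nlinarith [mul_le_mul (pow_le_pow_left₀ hb hbδ 2) hCb (by positivity) (sq_nonneg δ)]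
  nlinarith

theorem energy_bootstrap_general {H : Type*} [NormedAddCommGroup H]
    (𝓗 : H → ℝ) (C : ℝ) (hC : 0 < C)
    (hlow : ∀ v : H, ‖v‖ ^ 2 * (1 - C * ‖v‖) ≤ 𝓗 v)
    (hup : ∀ v : H, 𝓗 v ≤ ‖v‖ ^ 2 * (1 + C * ‖v‖))
    (T : ℝ) (hT : 0 ≤ T) (v : ℝ → H)
    (hv : ContinuousOn v (Set.Icc 0 T))
    (hv0 : ‖v 0‖ ≤ 1 / (4 * C))
    (hcons : ∀ t ∈ Set.Icc 0 T, 𝓗 (v t) = 𝓗 (v 0)) :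
    ∀ t ∈ Set.Icc 0 T, ‖v t‖ < 2 * (1 / (4 * C)) := by
  set δ := 1 / (4 * C)
  have hδ : 0 < δ := by positivity
  have hCδ : 4 * C * δ = 1 := mul_one_div_cancel (by positivity)
  have hgap : ∀ t ∈ Icc 0 T, ‖v t‖ < 2 * δ → ‖v t‖ ≤ 8 / 5 * δ := fun t ht hlt =>
    le_of_sq_mul_one_sub_le_sq_mul_one_add hCδ (norm_nonneg _) hlt.le hv0 <|
      (hlow (v t)).trans ((hcons t ht).symm ▸ hup (v 0))
  intro t ht
  have := isPreconnected_Icc.bootstrap_le hv.norm (by linarith) hgap (left_mem_Icc.2 hT)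
    (by linarith) t ht
  linarith

/-- Abstract bootstrap argument: let `H` be a real Hilbert space and
`𝓗 : H → ℝ` satisfy `‖v‖²(1 − C‖v‖) ≤ 𝓗(v) ≤ ‖v‖²(1 + C‖v‖)` for some `C > 0`.
Set `δ = 1/(4C)`.  If `v : [0,T] → H` is continuous, `‖v 0‖ ≤ δ` and
`𝓗(v t) = 𝓗(v 0)` for all `t ∈ [0,T]`, then `‖v t‖ < 2δ` on `[0,T]`. -/
theorem energy_bootstrap {H : Type*} [NormedAddCommGroup H] [InnerProductSpace ℝ H]
    [CompleteSpace H]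
    (𝓗 : H → ℝ) (C : ℝ) (hC : 0 < C)
    (hlow : ∀ v : H, ‖v‖ ^ 2 * (1 - C * ‖v‖) ≤ 𝓗 v)
    (hup : ∀ v : H, 𝓗 v ≤ ‖v‖ ^ 2 * (1 + C * ‖v‖))
    (T : ℝ) (hT : 0 ≤ T) (v : ℝ → H)
    (hv : ContinuousOn v (Set.Icc 0 T))
    (hv0 : ‖v 0‖ ≤ 1 / (4 * C))
    (hcons : ∀ t ∈ Set.Icc 0 T, 𝓗 (v t) = 𝓗 (v 0)) :
    ∀ t ∈ Set.Icc 0 T, ‖v t‖ < 2 * (1 / (4 * C)) :=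
  energy_bootstrap_general 𝓗 C hC hlow hup T hT v hv hv0 hcons
end

section
/- Let s > 1/2 and R > 0, and set T = 1/(7·C_s·R) where C_s is the algebra constant of Hˢ(ℝ). For v₀ ∈ Hˢ×Hˢ with ‖v₀‖ ≤ R, the map 𝓐(v)(t) = S(t)v₀ − ∫₀ᵗ S(t−r)·K∂x(η u, u²/2)ᵀ(r) dr is a contraction on the closed ball of radius 2‖v₀‖ in C([0,T]; Hˢ×Hˢ), and hence admits a unique fixed point there. -/
open MeasureTheory intervalIntegral Set

/-- The Duhamel (Picard) map `𝓐(v)(t) = S(t)v₀ − ∫₀ᵗ S(t−r) N(v(r)) dr`, where in the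
application `E = Hˢ(ℝ) × Hˢ(ℝ)`, `S` is the unitary group of the linearized system and
`N(η,u) = K∂x(ηu, u²/2)ᵀ` is the (bounded) regularized nonlinearity. -/
noncomputable def duhamelMap {E : Type*} [NormedAddCommGroup E] [NormedSpace ℝ E]
    [CompleteSpace E] (S : ℝ → E →L[ℝ] E) (N : E → E) (v₀ : E) (v : ℝ → E) (t : ℝ) : E :=
  S t v₀ - ∫ r in (0 : ℝ)..t, S (t - r) (N (v r))

/-! Since `S(t)` does not increase norms, `‖𝓐 v(t)‖ ≤ ‖v₀‖ + t · sup ‖N ∘ v‖` and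
`‖𝓐 v₁(t) − 𝓐 v₂(t)‖ ≤ t · sup ‖N ∘ v₁ − N ∘ v₂‖`. On the ball of radius `2‖v₀‖` the quadratic
bounds give `‖N v‖ ≤ 4 C_s ‖v₀‖²` and the Lipschitz constant `4 C_s ‖v₀‖`, and `7 C_s ‖v₀‖ T ≤ 1`
turns these into invariance of the ball and the contraction constant `4/7`. Banach's fixed point
theorem in the closed ball of `C([0,T]; E)`, on which `𝓐` acts after extending functions by
constants off `[0,T]`, yields the fixed point. -/
open scoped NNReal

theorem exists_isFixedPt_unique_of_mapsTo {X : Type*} [MetricSpace X] [CompleteSpace X]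
    {Φ : X → X} {s : Set X} {K : ℝ≥0} (hs : IsClosed s) (hne : s.Nonempty)
    (hmaps : MapsTo Φ s s) (hK : ContractingWith K (hmaps.restrict Φ s s)) :
    ∃ x ∈ s, Function.IsFixedPt Φ x ∧ ∀ y ∈ s, Function.IsFixedPt Φ y → y = x := by
  obtain ⟨x₀, hx₀⟩ := hne
  obtain ⟨x, hxs, hx, -⟩ := hK.exists_fixedPoint' hs.isComplete hmaps hx₀ (edist_ne_top _ _)
  refine ⟨x, hxs, hx, fun y hys hy => ?_⟩
  exact congrArg Subtype.val
    (hK.fixedPoint_unique' (x := ⟨y, hys⟩) (y := ⟨x, hxs⟩) (Subtype.ext hy) (Subtype.ext hx))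

theorem continuous_of_norm_sub_le_mul_add {F G : Type*} [SeminormedAddCommGroup F]
    [SeminormedAddCommGroup G] {f : F → G} {C : ℝ}
    (hf : ∀ x y, ‖f x - f y‖ ≤ C * ‖x - y‖ * (‖x‖ + ‖y‖)) : Continuous f := by
  refine continuous_iff_continuousAt.2 fun x => tendsto_iff_norm_sub_tendsto_zero.2 ?_
  have hbound : Filter.Tendsto (fun y => C * ‖y - x‖ * (‖y‖ + ‖x‖)) (nhds x) (nhds 0) := by
    simpa using ((by fun_prop : Continuous fun y => C * ‖y - x‖ * (‖y‖ + ‖x‖)).tendsto x)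
  exact squeeze_zero (fun _ => norm_nonneg _) (fun y => hf y x) hbound

section FixedPointOnIcc

variable {E : Type*} [NormedAddCommGroup E] [CompleteSpace E] {A : (ℝ → E) → ℝ → E}
  {T ρ : ℝ} {K : ℝ≥0}

theorem exists_fixedPoint_unique_on_Icc (hT : 0 ≤ T) (hρ : 0 ≤ ρ) (hK : K < 1)
    (hA_cont : ∀ v, Continuous v → Continuous (A v))
    (hA_local : ∀ v w, EqOn v w (Icc 0 T) → EqOn (A v) (A w) (Icc 0 T))
    (hA_ball : ∀ v, Continuous v → (∀ t ∈ Icc 0 T, ‖v t‖ ≤ ρ) → ∀ t ∈ Icc 0 T, ‖A v t‖ ≤ ρ)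
    (hA_lip : ∀ v w, Continuous v → Continuous w →
      (∀ t ∈ Icc 0 T, ‖v t‖ ≤ ρ) → (∀ t ∈ Icc 0 T, ‖w t‖ ≤ ρ) →
      ∀ d, (∀ t ∈ Icc 0 T, ‖v t - w t‖ ≤ d) → ∀ t ∈ Icc 0 T, ‖A v t - A w t‖ ≤ K * d) :
    ∃ v : ℝ → E,
      (ContinuousOn v (Icc 0 T) ∧ (∀ t ∈ Icc 0 T, ‖v t‖ ≤ ρ) ∧ ∀ t ∈ Icc 0 T, v t = A v t) ∧
      ∀ w : ℝ → E,
        (ContinuousOn w (Icc 0 T) ∧ (∀ t ∈ Icc 0 T, ‖w t‖ ≤ ρ) ∧ ∀ t ∈ Icc 0 T, w t = A w t) →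
        ∀ t ∈ Icc 0 T, w t = v t := by
  let ext : C(Icc 0 T, E) → ℝ → E := fun f => IccExtend hT f
  have ext_cont (f : C(Icc 0 T, E)) : Continuous (ext f) := f.continuous.Icc_extend'
  have ext_eq (f : C(Icc 0 T, E)) (t : ℝ) (ht : t ∈ Icc 0 T) : ext f t = f ⟨t, ht⟩ :=
    IccExtend_of_mem hT f ht
  have mem_ball (f : C(Icc 0 T, E)) : f ∈ Metric.closedBall 0 ρ ↔ ∀ t ∈ Icc 0 T, ‖ext f t‖ ≤ ρ := by
    rw [mem_closedBall_zero_iff, ContinuousMap.norm_le _ hρ, Subtype.forall]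
    exact forall₂_congr fun t ht => by rw [ext_eq f t ht]
  let Φ (f : C(Icc 0 T, E)) : C(Icc 0 T, E) :=
    ⟨(Icc 0 T).domRestrict (A (ext f)), (hA_cont _ (ext_cont f)).continuousOn.domRestrict⟩
  have hmaps : MapsTo Φ (Metric.closedBall 0 ρ) (Metric.closedBall 0 ρ) := fun f hf =>
    (mem_ball (Φ f)).2 fun t ht => by
      rw [ext_eq _ t ht]
      exact hA_ball _ (ext_cont f) ((mem_ball f).1 hf) t ht
  have hcontr : ContractingWith K (hmaps.restrict Φ _ _) := by
    refine ⟨hK, LipschitzWith.of_dist_le_mul fun f g => ?_⟩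
    rw [Subtype.dist_eq, ContinuousMap.dist_le (by positivity)]
    intro t
    rw [dist_eq_norm]
    refine hA_lip _ _ (ext_cont f) (ext_cont g) ((mem_ball f).1 f.2) ((mem_ball g).1 g.2) _
      (fun r hr => ?_) t t.2
    rw [ext_eq _ r hr, ext_eq _ r hr, ← dist_eq_norm, Subtype.dist_eq]
    exact ContinuousMap.dist_apply_le_dist _
  obtain ⟨F, hF_ball, hF_fix, hF_unique⟩ :=
    exists_isFixedPt_unique_of_mapsTo Metric.isClosed_closedBall
      ⟨0, Metric.mem_closedBall_self hρ⟩ hmaps hcontr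
  refine ⟨ext F, ⟨(ext_cont F).continuousOn, (mem_ball F).1 hF_ball, fun t ht => ?_⟩, ?_⟩
  · rw [ext_eq F t ht]
    exact (DFunLike.congr_fun hF_fix ⟨t, ht⟩).symm
  · rintro w ⟨hw_cont, hw_ball, hw_fix⟩ t ht
    let W : C(Icc 0 T, E) := ⟨(Icc 0 T).domRestrict w, hw_cont.domRestrict⟩
    have hW : EqOn (ext W) w (Icc 0 T) := fun t ht => ext_eq W t ht
    have hW_fix : Φ W = W :=
      ContinuousMap.ext fun t => (hA_local _ _ hW t.2).trans (hw_fix t t.2).symm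
    have hW_ball : W ∈ Metric.closedBall 0 ρ :=
      (mem_ball W).2 fun t ht => hW ht ▸ hw_ball t ht
    calc w t = W ⟨t, ht⟩ := rfl
      _ = F ⟨t, ht⟩ := by rw [hF_unique W hW_ball hW_fix]
      _ = ext F t := (ext_eq F t ht).symm

end FixedPointOnIcc

section Duhamel

variable {E : Type*} [NormedAddCommGroup E] [NormedSpace ℝ E] {S : ℝ → E →L[ℝ] E} {N : E → E}

theorem intervalIntegrable_duhamel_integrand (hS : Continuous fun p : ℝ × E => S p.1 p.2)
    (hN : Continuous N) {v : ℝ → E} {t : ℝ} (ht : 0 ≤ t) (hv : ContinuousOn v (Icc 0 t)) :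
    IntervalIntegrable (fun r => S (t - r) (N (v r))) volume 0 t := by
  refine ContinuousOn.intervalIntegrable ?_
  rw [uIcc_of_le ht]
  exact hS.comp_continuousOn
    ((continuousOn_const.sub continuousOn_id).prodMk (hN.comp_continuousOn hv))

variable [CompleteSpace E] {v₀ : E}

theorem duhamelMap_eqOn {v w : ℝ → E} {T : ℝ} (h : EqOn v w (Icc 0 T)) :
    EqOn (duhamelMap S N v₀ v) (duhamelMap S N v₀ w) (Icc 0 T) := by
  intro t ht
  refine congrArg (S t v₀ - ·) (integral_congr fun r hr => ?_)
  rw [uIcc_of_le ht.1] at hr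
  simp only [h ⟨hr.1, hr.2.trans ht.2⟩]

theorem continuous_duhamelMap (hS : Continuous fun p : ℝ × E => S p.1 p.2)
    (hN : Continuous N) {v : ℝ → E} (hv : Continuous v) :
    Continuous (duhamelMap S N v₀ v) := by
  unfold duhamelMap
  fun_prop

theorem norm_duhamelMap_le (hS : ∀ t x, ‖S t x‖ ≤ ‖x‖) {v : ℝ → E} {t M : ℝ} (ht : 0 ≤ t)
    (hM : ∀ r ∈ Ioc 0 t, ‖N (v r)‖ ≤ M) :
    ‖duhamelMap S N v₀ v t‖ ≤ ‖v₀‖ + M * t := by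
  have hint : ‖∫ r in (0 : ℝ)..t, S (t - r) (N (v r))‖ ≤ M * t := by
    have := norm_integral_le_of_norm_le_const (f := fun r => S (t - r) (N (v r))) fun r hr =>
      (hS _ _).trans (hM r (by rwa [uIoc_of_le ht] at hr))
    rwa [sub_zero, abs_of_nonneg ht] at this
  exact (norm_sub_le _ _).trans (add_le_add (hS _ _) hint)

theorem norm_duhamelMap_sub_le (hS : ∀ t x, ‖S t x‖ ≤ ‖x‖) {v₁ v₂ : ℝ → E} {t M : ℝ}
    (ht : 0 ≤ t) (h₁ : IntervalIntegrable (fun r => S (t - r) (N (v₁ r))) volume 0 t)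
    (h₂ : IntervalIntegrable (fun r => S (t - r) (N (v₂ r))) volume 0 t)
    (hM : ∀ r ∈ Ioc 0 t, ‖N (v₁ r) - N (v₂ r)‖ ≤ M) :
    ‖duhamelMap S N v₀ v₁ t - duhamelMap S N v₀ v₂ t‖ ≤ M * t := by
  have hdiff : duhamelMap S N v₀ v₁ t - duhamelMap S N v₀ v₂ t
      = ∫ r in (0 : ℝ)..t, S (t - r) (N (v₂ r) - N (v₁ r)) := by
    simp only [duhamelMap, map_sub, integral_sub h₂ h₁]
    abel
  rw [hdiff]
  have := norm_integral_le_of_norm_le_const (f := fun r => S (t - r) (N (v₂ r) - N (v₁ r)))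
    fun r hr => (hS _ _).trans ((norm_sub_rev _ _).trans_le (hM r (by rwa [uIoc_of_le ht] at hr)))
  rwa [sub_zero, abs_of_nonneg ht] at this

end Duhamel

section QuadraticNonlinearity

variable {E : Type*} [NormedAddCommGroup E] [NormedSpace ℝ E] [CompleteSpace E]
  {S : ℝ → E →L[ℝ] E} {N : E → E} {v₀ : E} {Cs T : ℝ}

theorem norm_duhamelMap_le_two_mul_norm (hS : ∀ t x, ‖S t x‖ ≤ ‖x‖) (hCs : 0 ≤ Cs)
    (hN : ∀ v, ‖N v‖ ≤ Cs * ‖v‖ ^ 2) (hT : 7 * Cs * ‖v₀‖ * T ≤ 1) {v : ℝ → E}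
    (hv : ∀ t ∈ Icc 0 T, ‖v t‖ ≤ 2 * ‖v₀‖) :
    ∀ t ∈ Icc 0 T, ‖duhamelMap S N v₀ v t‖ ≤ 2 * ‖v₀‖ := by
  intro t ht
  refine (norm_duhamelMap_le hS ht.1 (M := Cs * (2 * ‖v₀‖) ^ 2) fun r hr => ?_).trans ?_
  · exact (hN _).trans (by gcongr; exact hv r ⟨hr.1.le, hr.2.trans ht.2⟩)
  · have hsmall : Cs * ‖v₀‖ * t ≤ 1 / 7 := by
      nlinarith [mul_le_mul_of_nonneg_left ht.2 (by positivity : 0 ≤ Cs * ‖v₀‖)]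
    nlinarith [norm_nonneg v₀]

theorem norm_duhamelMap_sub_le_four_sevenths_mul (hS : ∀ t x, ‖S t x‖ ≤ ‖x‖)
    (hS_cont : Continuous fun p : ℝ × E => S p.1 p.2) (hCs : 0 ≤ Cs)
    (hN : ∀ v₁ v₂, ‖N v₁ - N v₂‖ ≤ Cs * ‖v₁ - v₂‖ * (‖v₁‖ + ‖v₂‖))
    (hT : 7 * Cs * ‖v₀‖ * T ≤ 1) (v₁ v₂ : ℝ → E)
    (hv₁ : ContinuousOn v₁ (Icc 0 T)) (hv₂ : ContinuousOn v₂ (Icc 0 T))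
    (hb₁ : ∀ t ∈ Icc 0 T, ‖v₁ t‖ ≤ 2 * ‖v₀‖) (hb₂ : ∀ t ∈ Icc 0 T, ‖v₂ t‖ ≤ 2 * ‖v₀‖) (d : ℝ)
    (hd : ∀ t ∈ Icc 0 T, ‖v₁ t - v₂ t‖ ≤ d) :
    ∀ t ∈ Icc 0 T, ‖duhamelMap S N v₀ v₁ t - duhamelMap S N v₀ v₂ t‖ ≤ 4 / 7 * d := by
  intro t ht
  have hN_cont := continuous_of_norm_sub_le_mul_add hN
  have hsub : Icc 0 t ⊆ Icc 0 T := Icc_subset_Icc_right ht.2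
  have hd₀ : 0 ≤ d := (norm_nonneg _).trans (hd t ht)
  refine (norm_duhamelMap_sub_le hS ht.1 (M := Cs * d * (4 * ‖v₀‖))
    (intervalIntegrable_duhamel_integrand hS_cont hN_cont ht.1 (hv₁.mono hsub))
    (intervalIntegrable_duhamel_integrand hS_cont hN_cont ht.1 (hv₂.mono hsub))
    fun r hr => ?_).trans ?_
  · have hr' : r ∈ Icc 0 T := ⟨hr.1.le, hr.2.trans ht.2⟩
    refine (hN _ _).trans ?_
    gcongr
    · exact hd r hr'
    · linarith [hb₁ r hr', hb₂ r hr']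
  · have hsmall : Cs * ‖v₀‖ * t ≤ 1 / 7 := by
      nlinarith [mul_le_mul_of_nonneg_left ht.2 (by positivity : 0 ≤ Cs * ‖v₀‖)]
    nlinarith

end QuadraticNonlinearity

/-- Local contraction for the regularized shallow-water system, abstractly.
Let `E` be a Banach space (playing the role of `Xˢ = Hˢ×Hˢ`, `s > 1/2`),
`S : ℝ → E →L[ℝ] E` a jointly continuous family of isometries (the unitary group),
and `N : E → E` the nonlinearity `v = (η,u) ↦ K∂x(ηu, u²/2)ᵀ`, satisfying
`‖N v‖ ≤ C_s ‖v‖²` and `‖N v₁ − N v₂‖ ≤ C_s ‖v₁ − v₂‖(‖v₁‖ + ‖v₂‖)`.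
Let `R > 0`, `T = 1/(7 C_s R)` and `‖v₀‖ ≤ R`.  Then the map `𝓐` maps the closed
ball of radius `2‖v₀‖` in `C([0,T]; E)` into itself, is a contraction there
(with contraction constant `4/7 < 1`), and hence admits a unique fixed point
in that ball. -/
theorem duhamel_contraction_and_fixed_point
    {E : Type*} [NormedAddCommGroup E] [NormedSpace ℝ E] [CompleteSpace E]
    (S : ℝ → E →L[ℝ] E)
    (hS_isom : ∀ (t : ℝ) (x : E), ‖S t x‖ = ‖x‖)
    (hS_cont : Continuous fun p : ℝ × E => S p.1 p.2)
    (N : E → E) (Cs : ℝ) (hCs : 0 < Cs)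
    (hN : ∀ v : E, ‖N v‖ ≤ Cs * ‖v‖ ^ 2)
    (hNlip : ∀ v₁ v₂ : E, ‖N v₁ - N v₂‖ ≤ Cs * ‖v₁ - v₂‖ * (‖v₁‖ + ‖v₂‖))
    (R : ℝ) (hR : 0 < R) (v₀ : E) (hv₀ : ‖v₀‖ ≤ R) :
    letI T : ℝ := 1 / (7 * Cs * R)
    -- 𝓐 maps the closed ball of radius 2‖v₀‖ into itself
    ((∀ v : ℝ → E, ContinuousOn v (Icc 0 T) → (∀ t ∈ Icc 0 T, ‖v t‖ ≤ 2 * ‖v₀‖) →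
        ∀ t ∈ Icc 0 T, ‖duhamelMap S N v₀ v t‖ ≤ 2 * ‖v₀‖) ∧
    -- 𝓐 is a contraction on this ball (in the supremum norm), with constant 4/7
    (∀ v₁ v₂ : ℝ → E, ContinuousOn v₁ (Icc 0 T) → ContinuousOn v₂ (Icc 0 T) →
        (∀ t ∈ Icc 0 T, ‖v₁ t‖ ≤ 2 * ‖v₀‖) → (∀ t ∈ Icc 0 T, ‖v₂ t‖ ≤ 2 * ‖v₀‖) →
        ∀ d : ℝ, (∀ t ∈ Icc 0 T, ‖v₁ t - v₂ t‖ ≤ d) →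
        ∀ t ∈ Icc 0 T, ‖duhamelMap S N v₀ v₁ t - duhamelMap S N v₀ v₂ t‖ ≤ (4 / 7) * d) ∧
    -- hence 𝓐 admits a unique fixed point in the ball
    (∃ v : ℝ → E,
      (ContinuousOn v (Icc 0 T) ∧ (∀ t ∈ Icc 0 T, ‖v t‖ ≤ 2 * ‖v₀‖) ∧
        ∀ t ∈ Icc 0 T, v t = duhamelMap S N v₀ v t) ∧
      ∀ w : ℝ → E,
        (ContinuousOn w (Icc 0 T) ∧ (∀ t ∈ Icc 0 T, ‖w t‖ ≤ 2 * ‖v₀‖) ∧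
          ∀ t ∈ Icc 0 T, w t = duhamelMap S N v₀ w t) →
        ∀ t ∈ Icc 0 T, w t = v t)) := by
  set T : ℝ := 1 / (7 * Cs * R)
  have hT_nonneg : 0 ≤ T := by positivity
  have hT : 7 * Cs * ‖v₀‖ * T ≤ 1 := by
    rw [mul_one_div, div_le_one (by positivity)]
    gcongr
  have hS : ∀ t x, ‖S t x‖ ≤ ‖x‖ := fun t x => (hS_isom t x).le
  have hball (v : ℝ → E) (_ : ContinuousOn v (Icc 0 T)) :=
    norm_duhamelMap_le_two_mul_norm (v := v) hS hCs.le hN hT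
  have hcontr := norm_duhamelMap_sub_le_four_sevenths_mul hS hS_cont hCs.le hNlip hT
  refine ⟨hball, hcontr, exists_fixedPoint_unique_on_Icc (K := 4 / 7) hT_nonneg (by positivity)
    (by norm_num) (fun _ => continuous_duhamelMap hS_cont (continuous_of_norm_sub_le_mul_add hNlip))
    (fun _ _ => duhamelMap_eqOn) (fun v hv => hball v hv.continuousOn)
    fun v₁ v₂ hv₁ hv₂ hb₁ hb₂ d hd => ?_⟩
  exact_mod_cast hcontr v₁ v₂ hv₁.continuousOn hv₂.continuousOn hb₁ hb₂ d hd
end
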